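/- arXiv:2603.23653 — 8 statements merged into one kernel-verified Lean document; each statement's English description precedes it below -/
import Mathlib

section
/- For all x, y > 0 with x/s + y/t = 1 and s, t > 0, one has s + t ≥ x + y + 2√(xy). -/
theorem wline_lower_bound (x y s t : ℝ) (hx : 0 < x) (hy : 0 < y)
    (hs : 0 < s) (ht : 0 < t) (h : x / s + y / t = 1) :
    x + y + 2 * Real.sqrt (x * y) ≤ s + t := by
  have h' : x * t + y * s = s * t := by
    field_simp at h; linarith
  have key : s + t - x - y = y * s / t + x * t / s := by
    field_simp
    nlinarith [h']
  have hpos1 : 0 ≤ y * s / t := by positivity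
  have hpos2 : 0 ≤ x * t / s := by positivity
  have hsq : Real.sqrt (y * s / t) * Real.sqrt (x * t / s) = Real.sqrt (x * y) := by
    rw [← Real.sqrt_mul hpos1]
    congr 1
    field_simp
  have amgm : 2 * Real.sqrt (x * y) ≤ y * s / t + x * t / s := by
    nlinarith [sq_nonneg (Real.sqrt (y * s / t) - Real.sqrt (x * t / s)),
      Real.sq_sqrt hpos1, Real.sq_sqrt hpos2, hsq]
  linarith
end

section
/- If a ≥ b ≥ c > 0, a < b + c, and a > 4c ≥ b, then b/3 + c/3 + 2√(bc)/3 ≤ c + a/2. -/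
theorem wA_le_wB_case2 (a b c : ℝ) (hab : b ≤ a) (hbc : c ≤ b) (hc : 0 < c)
    (htri : a < b + c) (h1 : 4 * c < a) (h2 : b ≤ 4 * c) :
    b / 3 + c / 3 + 2 * Real.sqrt (b * c) / 3 ≤ c + a / 2 := by
  have hs : Real.sqrt (b * c) ≤ 2 * c := by
    nlinarith [Real.sqrt_nonneg (b * c), Real.sq_sqrt (show (0:ℝ) ≤ b * c from mul_nonneg (by linarith) hc.le)]
  linarith
end

section
/- If a ≥ b ≥ c > 0, a < b + c, and b ≤ 4c, then (b + c + 2√(bc))/3 ≤ 4(a + b + c)/9, with equality if and only if a = b = c. -/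
theorem w_le_four_ninths_case1 (a b c : ℝ) (hab : b ≤ a) (hbc : c ≤ b) (hc : 0 < c)
    (htri : a < b + c) (h : b ≤ 4 * c) :
    (b + c + 2 * Real.sqrt (b * c)) / 3 ≤ 4 * (a + b + c) / 9 ∧
    ((b + c + 2 * Real.sqrt (b * c)) / 3 = 4 * (a + b + c) / 9 ↔ a = b ∧ b = c) := by
  have hb : (0:ℝ) < b := lt_of_lt_of_le hc hbc
  have h1 : Real.sqrt (b * c) ≤ (b + c) / 2 := by
    rw [show (b + c) / 2 = Real.sqrt (((b + c) / 2) ^ 2) from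
      (Real.sqrt_sq (by positivity)).symm]
    apply Real.sqrt_le_sqrt
    nlinarith [sq_nonneg (b - c)]
  constructor
  · linarith
  constructor
  · intro heq
    have hbceq : b = c := by linarith
    have hsb : Real.sqrt (b * c) = b := by
      rw [← hbceq, Real.sqrt_mul_self hb.le]
    have : a = b := by
      rw [hsb, ← hbceq] at heq; linarith
    exact ⟨this, hbceq⟩
  · rintro ⟨h1, h2⟩
    subst h1; subst h2
    rw [Real.sqrt_mul_self hb.le]
    ring
end

section
/- Define w(a,b,c) = (b + c + 2√(bc))/3 if b ≤ 4c and w(a,b,c) = c + b/2 if b > 4c. Then for all triangles with a ≥ b ≥ c > 0 and a < b + c, one has w(a,b,c) ≤ 4(a+b+c)/9, with equality if and only if a = b = c. -/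
noncomputable def w (a b c : ℝ) : ℝ :=
  if b ≤ 4 * c then (b + c + 2 * Real.sqrt (b * c)) / 3 else c + b / 2

theorem w_le_four_ninths (a b c : ℝ) (hab : b ≤ a) (hbc : c ≤ b) (hc : 0 < c)
    (htri : a < b + c) :
    w a b c ≤ 4 * (a + b + c) / 9 ∧
    (w a b c = 4 * (a + b + c) / 9 ↔ a = b ∧ b = c) := by
  have hb : 0 < b := lt_of_lt_of_le hc hbc
  set s := Real.sqrt (b * c) with hs
  have hs0 : 0 ≤ s := Real.sqrt_nonneg _
  have hs2 : s ^ 2 = b * c := Real.sq_sqrt (by positivity)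
  have hsb : s ≤ b := by
    have : b * c ≤ b * b := by nlinarith
    calc s ≤ Real.sqrt (b * b) := Real.sqrt_le_sqrt this
      _ = b := Real.sqrt_mul_self hb.le
  have h2s : 2 * s ≤ b + c := by nlinarith [sq_nonneg (b - c)]
  unfold w
  split_ifs with h4
  · constructor
    · nlinarith
    · constructor
      · intro heq
        -- 6s = 4a + b + c
        have h6 : 6 * s = 4 * a + b + c := by linarith
        have has : a = s := by linarith
        have hbs : b = s := le_antisymm (by linarith) hsb
        have hcb : c = b := by nlinarith
        exact ⟨by linarith, hcb.symm⟩
      · rintro ⟨h1, h2⟩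
        have : s = b := by
          rw [hs, ← h2]
          rw [Real.sqrt_mul_self hb.le]
        rw [← hs, this]
        linarith
  · push_neg at h4
    have hstrict : c + b / 2 < 4 * (a + b + c) / 9 := by linarith
    refine ⟨hstrict.le, ?_, ?_⟩
    · intro heq; exact absurd heq hstrict.ne
    · rintro ⟨h1, h2⟩; nlinarith
end

section
/- If a ≥ b ≥ c > 0, a < b + c, and b > 4c, then c + b/2 ≤ c + a/2 and c + a/2 ≤ (a + b + 2√(ab))/3. -/
theorem case3_chain (a b c : ℝ) (hab : b ≤ a) (hbc : c ≤ b) (hc : 0 < c)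
    (htri : a < b + c) (h : 4 * c < b) :
    c + b / 2 ≤ c + a / 2 ∧
    c + a / 2 ≤ (a + b + 2 * Real.sqrt (a * b)) / 3 := by
  constructor
  · linarith
  · have hb : (0:ℝ) < b := by linarith
    have hs : b ≤ Real.sqrt (a * b) := by
      rw [show a * b = b * a by ring]
      have := Real.sqrt_le_sqrt (show b * b ≤ b * a by nlinarith)
      simpa [Real.sqrt_mul_self hb.le] using this
    nlinarith
end

section
/- For reals a ≥ b ≥ c > 0 with a < b + c and a > 4c ≥ b, one has 6c + a ≤ 2b + 4√(ab). -/
theorem case2_wB_le_wC (a b c : ℝ) (hab : b ≤ a) (hbc : c ≤ b) (hc : 0 < c)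
    (htri : a < b + c) (h1 : 4 * c < a) (h2 : b ≤ 4 * c) :
    6 * c + a ≤ 2 * b + 4 * Real.sqrt (a * b) := by
  have hab0 : 0 ≤ a * b := by nlinarith
  have hs := Real.sq_sqrt hab0
  have hn := Real.sqrt_nonneg (a * b)
  set s := Real.sqrt (a * b)
  have hs2 : s ≥ 2 * c := by nlinarith [sq_nonneg (s - 2 * c), sq_nonneg (s + 2 * c)]
  nlinarith
end

section
/- For an equilateral triangle of side a with centroid G, every line through G divides the perimeter 3a into two parts, each of length at least (4/9)·3a = 4a/3. -/
set_option maxHeartbeats 1000000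


open scoped RealInnerProductSpace

lemma aux_indep {E : Type*} [NormedAddCommGroup E] [InnerProductSpace ℝ E]
    {v w : E} {a : ℝ} (ha : 0 < a) (hv : ‖v‖ = a) (hw : ‖w‖ = a)
    (hvw : ‖v - w‖ = a) {c d : ℝ} (h : c • v + d • w = 0) : c = 0 ∧ d = 0 := by
  have hin : ⟪v, w⟫ = a ^ 2 / 2 := by
    have := norm_sub_sq_real v w
    rw [hv, hw, hvw] at this
    nlinarith
  have h1 : ⟪v, c • v + d • w⟫ = 0 := by rw [h, inner_zero_right]
  have h2 : ⟪w, c • v + d • w⟫ = 0 := by rw [h, inner_zero_right]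
  rw [inner_add_right, real_inner_smul_right, real_inner_smul_right,
    real_inner_self_eq_norm_sq, hv, hin] at h1
  rw [inner_add_right, real_inner_smul_right, real_inner_smul_right,
    real_inner_self_eq_norm_sq, hw, real_inner_comm, hin] at h2
  have ha2 : 0 < a ^ 2 := by positivity
  constructor <;> nlinarith


/-- In an equilateral triangle of side `a`, every line through the centroid
meeting side `AB` at `M` and side `AC` at `N` divides the perimeter `3a` into
two parts each of length at least `(4/9)·3a = 4a/3`. -/
theorem equilateral_perimeter_winternitz (a : ℝ) (ha : 0 < a)
    (A B C : EuclideanSpace ℝ (Fin 2))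
    (hAB : dist A B = a) (hBC : dist B C = a) (hCA : dist C A = a)
    (G : EuclideanSpace ℝ (Fin 2)) (hG : G = (3 : ℝ)⁻¹ • (A + B + C))
    (M N : EuclideanSpace ℝ (Fin 2))
    (hM : M ∈ segment ℝ A B) (hN : N ∈ segment ℝ A C) (hMN : M ≠ N)
    (hGMN : Collinear ℝ {M, N, G}) :
    4 * a / 3 ≤ dist A M + dist A N ∧
    dist A M + dist A N ≤ 3 * a - 4 * a / 3 := by
  rw [segment_eq_image'] at hM hN
  obtain ⟨s, ⟨hs0, hs1⟩, hsM⟩ := hM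
  obtain ⟨t, ⟨ht0, ht1⟩, htN⟩ := hN
  -- vector equations
  rw [collinear_iff_of_mem (Set.mem_insert M {N, G})] at hGMN
  obtain ⟨v, hv⟩ := hGMN
  obtain ⟨r1, hr1⟩ := hv N (by simp)
  obtain ⟨r2, hr2⟩ := hv G (by simp)
  have hr1ne : r1 ≠ 0 := by
    rintro rfl; apply hMN; rw [hr1]; simp
  set r : ℝ := r2 / r1 with hrdef
  have hr : r • (N - M) + M = G := by
    rw [hr1, hr2]
    simp only [vadd_eq_add]
    rw [add_sub_cancel_right, smul_smul, div_mul_cancel₀ _ hr1ne]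
  have key : ((1 - r) * s - 1/3) • (B - A) + (r * t - 1/3) • (C - A) = 0 := by
    have h := hr
    rw [← hsM, ← htN, hG] at h
    simp only [vsub_eq_sub, vadd_eq_add] at h
    linear_combination (norm := module) h
  have hvB : ‖B - A‖ = a := by rw [← dist_eq_norm, dist_comm]; exact hAB
  have hvC : ‖C - A‖ = a := by rw [← dist_eq_norm]; exact hCA
  have hvBC : ‖(B - A) - (C - A)‖ = a := by
    have : (B - A) - (C - A) = B - C := by abel
    rw [this, ← dist_eq_norm]; exact hBC
  obtain ⟨e1, e2⟩ := aux_indep ha hvB hvC hvBC key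
  have hs' : (1 - r) * s = 1/3 := by linarith
  have ht' : r * t = 1/3 := by linarith
  have hsp : 0 < s := by
    rcases lt_or_eq_of_le hs0 with h | h
    · exact h
    · exfalso; rw [← h] at hs'; simp at hs'
  have htp : 0 < t := by
    rcases lt_or_eq_of_le ht0 with h | h
    · exact h
    · exfalso; rw [← h] at ht'; simp at ht'
  have hst : s + t = 3 * s * t := by nlinarith [hs', ht']
  have hdM : dist A M = s * a := by
    rw [← hsM, dist_eq_norm]
    have : A - (A + s • (B - A)) = (-s) • (B - A) := by module
    rw [this, norm_smul, hvB]
    simp [abs_of_nonneg hs0]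
  have hdN : dist A N = t * a := by
    rw [← htN, dist_eq_norm]
    have : A - (A + t • (C - A)) = (-t) • (C - A) := by module
    rw [this, norm_smul, hvC]
    simp [abs_of_nonneg ht0]
  rw [hdM, hdN]
  constructor
  · nlinarith [sq_nonneg (s - t), mul_pos hsp htp]
  · nlinarith [mul_nonneg (sub_nonneg.2 hs1) (sub_nonneg.2 ht1)]
end

section
/- For the centroid G of triangle ABC with sides a = BC, b = CA, c = AB, the parallels through G to the sides divide each side into segments so that the distances from G to the sides of angle A, measured as coefficients along unit vectors from A, are x = c/3 and y = b/3; consequently the W-line relative to A cuts off perimeter length (√(c/3) + √(b/3))² = (b + c + 2√(bc))/3 from angle A. -/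
/-!
Writing `u = c⁻¹ • (B - A)` and `v = b⁻¹ • (C - A)`, the centroid is
`A + (B - A)/3 + (C - A)/3 = A + (c/3) • u + (b/3) • v`. A line through `G` meeting the sides
of the angle at `A` at distances `s` and `t` from `A` satisfies `x/s + y/t = 1` with
`(x, y) = (c/3, b/3)`, and Sedrakyan's form of Cauchy–Schwarz gives
`(√x + √y)² ≤ (s + t) (x/s + y/t) = s + t`.
-/

theorem div_smul_inv_smul {V : Type*} [AddCommGroup V] [Module ℝ V] {c : ℝ} (hc : c ≠ 0)
    (k : ℝ) (v : V) : (c / k) • (c⁻¹ • v) = k⁻¹ • v := by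
  rw [smul_smul, div_mul_eq_mul_div, mul_inv_cancel₀ hc, one_div]

theorem Real.sq_sqrt_add_sqrt {x y : ℝ} (hx : 0 ≤ x) (hy : 0 ≤ y) :
    (√x + √y) ^ 2 = x + y + 2 * √(x * y) := by
  rw [add_sq, Real.sq_sqrt hx, Real.sq_sqrt hy, Real.sqrt_mul hx]
  ring

theorem Real.sq_sqrt_add_sqrt_le_of_div_add_div_eq_one {x y s t : ℝ} (hx : 0 ≤ x) (hy : 0 ≤ y)
    (hs : 0 < s) (ht : 0 < t) (h : x / s + y / t = 1) : (√x + √y) ^ 2 ≤ s + t := by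
  have hpos : ∀ i ∈ Finset.univ, 0 < ![s, t] i := by
    intro i _
    fin_cases i <;> simpa
  have sedrakyan := Finset.sq_sum_div_le_sum_sq_div Finset.univ ![√x, √y] hpos
  simp only [Fin.sum_univ_two, Matrix.cons_val_zero, Matrix.cons_val_one, Real.sq_sqrt hx,
    Real.sq_sqrt hy, h] at sedrakyan
  rwa [div_le_one (by positivity)] at sedrakyan

theorem centroid_wline_general (A B C : EuclideanSpace ℝ (Fin 2)) (b c : ℝ)
    (hB : 0 < b) (hC : 0 < c)
    (G : EuclideanSpace ℝ (Fin 2)) (hG : G = (3 : ℝ)⁻¹ • (A + B + C)) :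
    G = A + (c / 3) • (c⁻¹ • (B - A)) + (b / 3) • (b⁻¹ • (C - A)) ∧
    (Real.sqrt (c / 3) + Real.sqrt (b / 3)) ^ 2
      = (b + c + 2 * Real.sqrt (b * c)) / 3 ∧
    ∀ s t : ℝ, 0 < s → 0 < t → (c / 3) / s + (b / 3) / t = 1 →
      (b + c + 2 * Real.sqrt (b * c)) / 3 ≤ s + t := by
  have perimeter : (√(c / 3) + √(b / 3)) ^ 2 = (b + c + 2 * √(b * c)) / 3 := by
    have h9 : √(c / 3 * (b / 3)) = √(b * c) / 3 := by
      rw [show c / 3 * (b / 3) = b * c / 3 ^ 2 by ring, Real.sqrt_div' _ (by positivity),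
        Real.sqrt_sq (by norm_num)]
    rw [Real.sq_sqrt_add_sqrt (by positivity) (by positivity), h9]
    ring
  refine ⟨?_, perimeter, fun s t hs ht hst => ?_⟩
  · rw [hG, div_smul_inv_smul hC.ne', div_smul_inv_smul hB.ne']
    module
  · rw [← perimeter]
    exact Real.sq_sqrt_add_sqrt_le_of_div_add_div_eq_one (by positivity) (by positivity) hs ht hst

/-- The centroid `G` of triangle `ABC` satisfies `G = A + (c/3)•u + (b/3)•v` for
unit vectors `u, v` along `AB, AC`, and the W-line relative to `A` cuts off
perimeter `(√(c/3) + √(b/3))² = (b + c + 2√(bc))/3`, which is the minimal value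
of `s + t` over lines through `G` crossing the sides of the angle at `A`. -/
theorem centroid_wline (A B C : EuclideanSpace ℝ (Fin 2)) (a b c : ℝ)
    (ha : dist B C = a) (hb : dist C A = b) (hc : dist A B = c)
    (hA : 0 < a) (hB : 0 < b) (hC : 0 < c)
    (G : EuclideanSpace ℝ (Fin 2)) (hG : G = (3 : ℝ)⁻¹ • (A + B + C)) :
    G = A + (c / 3) • (c⁻¹ • (B - A)) + (b / 3) • (b⁻¹ • (C - A)) ∧
    (Real.sqrt (c / 3) + Real.sqrt (b / 3)) ^ 2
      = (b + c + 2 * Real.sqrt (b * c)) / 3 ∧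
    ∀ s t : ℝ, 0 < s → 0 < t → (c / 3) / s + (b / 3) / t = 1 →
      (b + c + 2 * Real.sqrt (b * c)) / 3 ≤ s + t :=
  centroid_wline_general A B C b c hB hC G hG
end
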